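/- Fix m ∈ [0,1) and let T = 1/(4(1−m)). For t ∈ (0,T), the pair X(t,z) = 2t(z−m)𝟙_{[m,1]}(z), Y(t,z) = (1 − 2t(1−z))𝟙_{[m,1]}(z) satisfies pointwise the pseudo-inverse system ∂_t X(t,z) = ∫₀¹ sign(X(t,z)−X(t,ξ))dξ − ∫₀¹ sign(X(t,z)−Y(t,ξ))dξ and similarly for Y, with sign(0)=0; in particular ∂_t X(t,z) = 2(z−m)𝟙_{[m,1]}(z) and ∂_t Y(t,z) = 2(z−1)𝟙_{[m,1]}(z). -/

import Mathlib

open MeasureTheory Set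

/-- Pseudo-inverse of the first species for initial datum `ρ₀ = δ₀`,
`η₀ = mδ₀ + (1−m)δ₁`. -/
noncomputable def Xov (m t z : ℝ) : ℝ :=
  2 * t * (z - m) * Set.indicator (Icc m 1) (fun _ => (1 : ℝ)) z

/-- Pseudo-inverse of the second species for the same initial datum. -/
noncomputable def Yov (m t z : ℝ) : ℝ :=
  (1 - 2 * t * (1 - z)) * Set.indicator (Icc m 1) (fun _ => (1 : ℝ)) z

/-!
On `[m, 1]` both pseudo-inverses are strictly increasing in `z`, and for `t < 1/(4(1−m))` the
values of `X` stay below `1/2` while those of `Y` stay above it; below `m` both vanish. Hence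
every integrand `ξ ↦ sign (v − F ξ)` is constant on at most three subintervals of `(0, 1)`
(cut at `m` and at `z`), and the four integrals are explicit. In each velocity the contribution
`m · sign v` of `(0, m)` appears in both integrals and cancels, leaving `2(z − m)` resp. `2(z − 1)`
on `[m, 1]` and `0` below `m`. Both pseudo-inverses are affine in `t` with exactly these slopes.
-/

section PiecewiseConstant

variable {f : ℝ → ℝ} {a b c : ℝ}

lemma intervalIntegrable_of_eqOn_Ioo (hab : a ≤ b) (h : EqOn f (fun _ => c) (Ioo a b)) :
    IntervalIntegrable f volume a b :=
  (intervalIntegrable_iff_integrableOn_Ioo_of_le hab).2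
    ((integrableOn_const measure_Ioo_lt_top.ne).congr_fun h.symm measurableSet_Ioo)

lemma intervalIntegral_eq_of_eqOn_Ioo (hab : a ≤ b) (h : EqOn f (fun _ => c) (Ioo a b)) :
    ∫ x in a..b, f x = (b - a) * c := by
  rw [intervalIntegral.integral_of_le hab, integral_Ioc_eq_integral_Ioo,
    setIntegral_congr_fun measurableSet_Ioo h, setIntegral_const,
    Real.volume_real_Ioo_of_le hab, smul_eq_mul]

lemma integral_Ioo_eq_of_piecewise_const {p q c₁ c₂ c₃ : ℝ} (hp : a ≤ p) (hpq : p ≤ q)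
    (hq : q ≤ b) (h₁ : EqOn f (fun _ => c₁) (Ioo a p)) (h₂ : EqOn f (fun _ => c₂) (Ioo p q))
    (h₃ : EqOn f (fun _ => c₃) (Ioo q b)) :
    ∫ x in Ioo a b, f x = (p - a) * c₁ + (q - p) * c₂ + (b - q) * c₃ := by
  rw [← integral_Ioc_eq_integral_Ioo, ← intervalIntegral.integral_of_le (hp.trans (hpq.trans hq)),
    ← intervalIntegral.integral_add_adjacent_intervals (intervalIntegrable_of_eqOn_Ioo hp h₁)
      ((intervalIntegrable_of_eqOn_Ioo hpq h₂).trans (intervalIntegrable_of_eqOn_Ioo hq h₃)),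
    ← intervalIntegral.integral_add_adjacent_intervals (intervalIntegrable_of_eqOn_Ioo hpq h₂)
      (intervalIntegrable_of_eqOn_Ioo hq h₃),
    intervalIntegral_eq_of_eqOn_Ioo hp h₁, intervalIntegral_eq_of_eqOn_Ioo hpq h₂,
    intervalIntegral_eq_of_eqOn_Ioo hq h₃, add_assoc]

end PiecewiseConstant

section SignIntegrals

variable {F : ℝ → ℝ} {m : ℝ}

lemma integral_sign_sub_of_strictMonoOn (hm : 0 ≤ m) (hF₀ : EqOn F 0 (Ioo 0 m))
    (hF : StrictMonoOn F (Icc m 1)) {z : ℝ} (hz : z ∈ Icc m 1) :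
    ∫ ξ in Ioo (0 : ℝ) 1, Real.sign (F z - F ξ) = m * Real.sign (F z) + (z - m) - (1 - z) := by
  rw [integral_Ioo_eq_of_piecewise_const hm hz.1 hz.2 (c₁ := Real.sign (F z)) (c₂ := 1)
    (c₃ := -1)]
  · ring
  · intro ξ hξ
    simp [hF₀ hξ]
  · intro ξ hξ
    exact Real.sign_of_pos (sub_pos.2 (hF ⟨hξ.1.le, hξ.2.le.trans hz.2⟩ hz hξ.2))
  · intro ξ hξ
    exact Real.sign_of_neg (sub_neg.2 (hF hz ⟨hz.1.trans hξ.1.le, hξ.2.le⟩ hξ.1))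

lemma integral_sign_sub_of_forall_lt (hm : m ∈ Icc (0 : ℝ) 1) (hF₀ : EqOn F 0 (Ioo 0 m))
    {v : ℝ} (hv : ∀ ξ ∈ Ioo m 1, F ξ < v) :
    ∫ ξ in Ioo (0 : ℝ) 1, Real.sign (v - F ξ) = m * Real.sign v + (1 - m) := by
  rw [integral_Ioo_eq_of_piecewise_const hm.1 le_rfl hm.2 (c₁ := Real.sign v) (c₂ := 0)
    (c₃ := 1)]
  · ring
  · intro ξ hξ
    simp [hF₀ hξ]
  · simp
  · intro ξ hξ
    exact Real.sign_of_pos (sub_pos.2 (hv ξ hξ))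

lemma integral_sign_sub_of_forall_gt (hm : m ∈ Icc (0 : ℝ) 1) (hF₀ : EqOn F 0 (Ioo 0 m))
    {v : ℝ} (hv : ∀ ξ ∈ Ioo m 1, v < F ξ) :
    ∫ ξ in Ioo (0 : ℝ) 1, Real.sign (v - F ξ) = m * Real.sign v - (1 - m) := by
  rw [integral_Ioo_eq_of_piecewise_const hm.1 le_rfl hm.2 (c₁ := Real.sign v) (c₂ := 0)
    (c₃ := -1)]
  · ring
  · intro ξ hξ
    simp [hF₀ hξ]
  · simp
  · intro ξ hξ
    exact Real.sign_of_neg (sub_neg.2 (hv ξ hξ))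

end SignIntegrals

/-- Right-hand side of the pseudo-inverse system at the value `v` of the species with
pseudo-inverse `F`, the other species having pseudo-inverse `G`. -/
noncomputable def pseudoInverseVelocity (F G : ℝ → ℝ) (v : ℝ) : ℝ :=
  (∫ ξ in Ioo (0 : ℝ) 1, Real.sign (v - F ξ)) - ∫ ξ in Ioo (0 : ℝ) 1, Real.sign (v - G ξ)

lemma pseudoInverseVelocity_zero_of_pos {F G : ℝ → ℝ} {m : ℝ} (hm : m ∈ Icc (0 : ℝ) 1)
    (hF₀ : EqOn F 0 (Ioo 0 m)) (hG₀ : EqOn G 0 (Ioo 0 m)) (hF : ∀ ξ ∈ Ioo m 1, 0 < F ξ)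
    (hG : ∀ ξ ∈ Ioo m 1, 0 < G ξ) :
    pseudoInverseVelocity F G 0 = 0 := by
  rw [pseudoInverseVelocity, integral_sign_sub_of_forall_gt hm hF₀ hF,
    integral_sign_sub_of_forall_gt hm hG₀ hG, sub_self]

section Profiles

variable {m t z : ℝ}

lemma Xov_of_lt (hz : z < m) : Xov m t z = 0 := by
  simp [Xov, indicator_of_notMem (fun h : z ∈ Icc m 1 => hz.not_ge h.1)]

lemma Yov_of_lt (hz : z < m) : Yov m t z = 0 := by
  simp [Yov, indicator_of_notMem (fun h : z ∈ Icc m 1 => hz.not_ge h.1)]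

lemma Xov_of_mem (hz : z ∈ Icc m 1) : Xov m t z = 2 * t * (z - m) := by
  simp [Xov, indicator_of_mem hz]

lemma Yov_of_mem (hz : z ∈ Icc m 1) : Yov m t z = 1 - 2 * t * (1 - z) := by
  simp [Yov, indicator_of_mem hz]

lemma eqOn_Xov_zero : EqOn (Xov m t) 0 (Ioo 0 m) := fun _ hξ => Xov_of_lt hξ.2

lemma eqOn_Yov_zero : EqOn (Yov m t) 0 (Ioo 0 m) := fun _ hξ => Yov_of_lt hξ.2

lemma strictMonoOn_Xov (ht : 0 < t) : StrictMonoOn (Xov m t) (Icc m 1) := by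
  intro x hx y hy hxy
  rw [Xov_of_mem hx, Xov_of_mem hy]
  nlinarith

lemma strictMonoOn_Yov (ht : 0 < t) : StrictMonoOn (Yov m t) (Icc m 1) := by
  intro x hx y hy hxy
  rw [Yov_of_mem hx, Yov_of_mem hy]
  nlinarith

lemma Xov_pos (ht : 0 < t) {ξ : ℝ} (hξ : ξ ∈ Ioo m 1) : 0 < Xov m t ξ := by
  rw [Xov_of_mem (Ioo_subset_Icc_self hξ)]
  nlinarith [hξ.1]

lemma Yov_pos (ht : 0 ≤ t) (hT : 2 * t * (1 - m) < 1) {ξ : ℝ} (hξ : ξ ∈ Ioo m 1) :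
    0 < Yov m t ξ := by
  rw [Yov_of_mem (Ioo_subset_Icc_self hξ)]
  nlinarith [hξ.1]

lemma Xov_lt_Yov (hT : 4 * t * (1 - m) < 1) {ξ : ℝ} (hξ : ξ ∈ Icc m 1) (hz : z ∈ Icc m 1) :
    Xov m t ξ < Yov m t z := by
  rw [Xov_of_mem hξ, Yov_of_mem hz]
  rcases le_or_gt 0 t with ht | ht
  · nlinarith [hξ.2, hz.1]
  · nlinarith [hξ.1, hz.2]

lemma pseudoInverseVelocity_Xov (hm : m ∈ Icc (0 : ℝ) 1) (ht : 0 < t)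
    (hT : 4 * t * (1 - m) < 1) (hz : z ≤ 1) :
    pseudoInverseVelocity (Xov m t) (Yov m t) (Xov m t z) =
      2 * (z - m) * Set.indicator (Icc m 1) (fun _ => (1 : ℝ)) z := by
  rcases lt_or_ge z m with hzm | hzm
  · rw [Xov_of_lt hzm, indicator_of_notMem (fun h => hzm.not_ge h.1), mul_zero]
    exact pseudoInverseVelocity_zero_of_pos hm eqOn_Xov_zero eqOn_Yov_zero
      (fun _ => Xov_pos ht) (fun _ => Yov_pos ht.le (by nlinarith))
  · have hzI : z ∈ Icc m 1 := ⟨hzm, hz⟩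
    rw [pseudoInverseVelocity, integral_sign_sub_of_strictMonoOn hm.1 eqOn_Xov_zero
      (strictMonoOn_Xov ht) hzI, integral_sign_sub_of_forall_gt hm eqOn_Yov_zero
      (fun ξ hξ => Xov_lt_Yov hT hzI (Ioo_subset_Icc_self hξ)), indicator_of_mem hzI]
    ring

lemma pseudoInverseVelocity_Yov (hm : m ∈ Icc (0 : ℝ) 1) (ht : 0 < t)
    (hT : 4 * t * (1 - m) < 1) (hz : z ≤ 1) :
    pseudoInverseVelocity (Yov m t) (Xov m t) (Yov m t z) =
      2 * (z - 1) * Set.indicator (Icc m 1) (fun _ => (1 : ℝ)) z := by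
  rcases lt_or_ge z m with hzm | hzm
  · rw [Yov_of_lt hzm, indicator_of_notMem (fun h => hzm.not_ge h.1), mul_zero]
    exact pseudoInverseVelocity_zero_of_pos hm eqOn_Yov_zero eqOn_Xov_zero
      (fun _ => Yov_pos ht.le (by nlinarith)) (fun _ => Xov_pos ht)
  · have hzI : z ∈ Icc m 1 := ⟨hzm, hz⟩
    rw [pseudoInverseVelocity, integral_sign_sub_of_strictMonoOn hm.1 eqOn_Yov_zero
      (strictMonoOn_Yov ht) hzI, integral_sign_sub_of_forall_lt hm eqOn_Xov_zero
      (fun ξ hξ => Xov_lt_Yov hT (Ioo_subset_Icc_self hξ) hzI), indicator_of_mem hzI]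
    ring

lemma hasDerivAt_Xov (m z t : ℝ) :
    HasDerivAt (fun τ => Xov m τ z)
      (2 * (z - m) * Set.indicator (Icc m 1) (fun _ => (1 : ℝ)) z) t := by
  have hXov : (fun τ => Xov m τ z) =
      fun τ => τ * (2 * (z - m) * Set.indicator (Icc m 1) (fun _ => (1 : ℝ)) z) := by
    funext τ
    rw [Xov]
    ring
  rw [hXov]
  exact hasDerivAt_mul_const _

lemma hasDerivAt_Yov (m z t : ℝ) :
    HasDerivAt (fun τ => Yov m τ z)
      (2 * (z - 1) * Set.indicator (Icc m 1) (fun _ => (1 : ℝ)) z) t := by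
  have hYov : (fun τ => Yov m τ z) =
      fun τ => τ * (2 * (z - 1) * Set.indicator (Icc m 1) (fun _ => (1 : ℝ)) z) +
        Set.indicator (Icc m 1) (fun _ => (1 : ℝ)) z := by
    funext τ
    rw [Yov]
    ring
  rw [hYov]
  exact (hasDerivAt_mul_const _).add_const _

end Profiles

/-- for `m ∈ [0,1)` and `t ∈ (0, 1/(4(1−m)))`, the pair `(X,Y)` given by
`X(t,z) = 2t(z−m)𝟙_{[m,1]}(z)`, `Y(t,z) = (1−2t(1−z))𝟙_{[m,1]}(z)` solves the
pseudo-inverse system pointwise (with `sign 0 = 0`); in particular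
`∂ₜX = 2(z−m)𝟙_{[m,1]}(z)` and `∂ₜY = 2(z−1)𝟙_{[m,1]}(z)`. -/
theorem overlapping_deltas_gradient_flow_solution
    (m : ℝ) (hm : m ∈ Ico (0 : ℝ) 1) :
    ∀ t ∈ Ioo (0 : ℝ) (1 / (4 * (1 - m))), ∀ z ∈ Icc (0 : ℝ) 1,
      HasDerivAt (fun τ : ℝ => Xov m τ z)
        ((∫ ξ in Ioo (0 : ℝ) 1, Real.sign (Xov m t z - Xov m t ξ)) -
          ∫ ξ in Ioo (0 : ℝ) 1, Real.sign (Xov m t z - Yov m t ξ)) t ∧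
      HasDerivAt (fun τ : ℝ => Yov m τ z)
        ((∫ ξ in Ioo (0 : ℝ) 1, Real.sign (Yov m t z - Yov m t ξ)) -
          ∫ ξ in Ioo (0 : ℝ) 1, Real.sign (Yov m t z - Xov m t ξ)) t ∧
      ((∫ ξ in Ioo (0 : ℝ) 1, Real.sign (Xov m t z - Xov m t ξ)) -
          (∫ ξ in Ioo (0 : ℝ) 1, Real.sign (Xov m t z - Yov m t ξ)) =
        2 * (z - m) * Set.indicator (Icc m 1) (fun _ => (1 : ℝ)) z) ∧
      ((∫ ξ in Ioo (0 : ℝ) 1, Real.sign (Yov m t z - Yov m t ξ)) -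
          (∫ ξ in Ioo (0 : ℝ) 1, Real.sign (Yov m t z - Xov m t ξ)) =
        2 * (z - 1) * Set.indicator (Icc m 1) (fun _ => (1 : ℝ)) z) := by
  rintro t ⟨ht, htT⟩ z ⟨-, hz⟩
  have hm' : m ∈ Icc (0 : ℝ) 1 := Ico_subset_Icc_self hm
  have hT : 4 * t * (1 - m) < 1 := by
    rw [lt_div_iff₀ (by linarith [hm.2])] at htT
    linarith
  have hX := pseudoInverseVelocity_Xov hm' ht hT hz
  have hY := pseudoInverseVelocity_Yov hm' ht hT hz
  exact ⟨(hasDerivAt_Xov m z t).congr_deriv hX.symm, (hasDerivAt_Yov m z t).congr_deriv hY.symm,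
    hX, hY⟩
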